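/- arXiv:1603.07500 — 2 statements merged into one kernel-verified Lean document; each statement's English description precedes it below -/
import Mathlib

section
/- If C2 = P_ã(C1) and G(t,s) is the polynomial associated with the projection P_ã, then G(t,s) divides 𝒩(t,s) in ℝ[t,s], where 𝒩(t,s) is the square-free part of the numerator of the rational function N(t,s)·(x1(t) − x2(s)). -/
noncomputable section

open Polynomial Filter Matrix

/-- Evaluation of a real rational function at a real point (junk value at poles). -/
def RFeval (f : RatFunc ℝ) (t : ℝ) : ℝ := f.num.eval t / f.denom.eval t

/-- Evaluation of a real rational function at a complex point (junk value at poles). -/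
def RFevalC (f : RatFunc ℝ) (t : ℂ) : ℂ :=
  ((f.num.map (algebraMap ℝ ℂ)).eval t) / ((f.denom.map (algebraMap ℝ ℂ)).eval t)

/-- The derivative of a rational function. -/
def RFderiv (f : RatFunc ℝ) : RatFunc ℝ :=
  (algebraMap (Polynomial ℝ) (RatFunc ℝ) (derivative f.num) *
      algebraMap (Polynomial ℝ) (RatFunc ℝ) f.denom -
    algebraMap (Polynomial ℝ) (RatFunc ℝ) f.num *
      algebraMap (Polynomial ℝ) (RatFunc ℝ) (derivative f.denom)) /
  algebraMap (Polynomial ℝ) (RatFunc ℝ) (f.denom ^ 2)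

/-- The real domain of definition of a rational space parametrization. -/
def DomR (x : Fin 3 → RatFunc ℝ) (t : ℝ) : Prop := ∀ i, (x i).denom.eval t ≠ 0

/-- The complex domain of definition of a rational space parametrization. -/
def DomC (x : Fin 3 → RatFunc ℝ) (t : ℂ) : Prop :=
  ∀ i, ((x i).denom.map (algebraMap ℝ ℂ)).eval t ≠ 0

/-- The affine point of the curve corresponding to the (real) parameter value `t`. -/
def evalAff (x : Fin 3 → RatFunc ℝ) (t : ℝ) : Fin 3 → ℝ := fun i => RFeval (x i) t

/-- The affine point of the curve corresponding to the (complex) parameter value `t`. -/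
def evalAffC (x : Fin 3 → RatFunc ℝ) (t : ℂ) : Fin 3 → ℂ := fun i => RFevalC (x i) t

/-- Properness of a parametrization: it is injective for all but finitely many
(complex) parameter values. -/
def ProperParam (x : Fin 3 → RatFunc ℝ) : Prop :=
  {t : ℂ | DomC x t ∧ ∃ t', t' ≠ t ∧ DomC x t' ∧ evalAffC x t' = evalAffC x t}.Finite

/-- The curve is a straight line. -/
def IsLineParam (x : Fin 3 → RatFunc ℝ) : Prop :=
  ∃ p v : Fin 3 → ℝ, v ≠ 0 ∧ ∀ t : ℝ, DomR x t → ∃ μ : ℝ, evalAff x t = p + μ • v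

/-- The curve lies in the plane with coefficient vector `n = (A,B,C,D)`,
of equation `Ax + By + Cz + D = 0`. -/
def InPlane (x : Fin 3 → RatFunc ℝ) (n : Fin 4 → ℝ) : Prop :=
  ∀ t : ℝ, DomR x t → (∑ i : Fin 3, n i.castSucc * RFeval (x i) t) + n 3 = 0

/-- The normal vector of the plane `Ax + By + Cz + D = 0` is nonzero. -/
def PlaneNormalNZ (n : Fin 4 → ℝ) : Prop := ¬ (n 0 = 0 ∧ n 1 = 0 ∧ n 2 = 0)

/-- Complexification of a real vector. -/
def cmap4 (v : Fin 4 → ℝ) : Fin 4 → ℂ := fun i => (v i : ℂ)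

/-- Homogeneous form of the projection onto the plane `n` from the eye point `a`:
`p ↦ ⟨n,p⟩ a − ⟨n,a⟩ p`. -/
def projHC (n a p : Fin 4 → ℂ) : Fin 4 → ℂ :=
  (∑ i, n i * p i) • a - (∑ i, n i * a i) • p

/-- Complex homogeneous coordinates of the affine point `x(t)`. -/
def homC (x : Fin 3 → RatFunc ℝ) (t : ℂ) : Fin 4 → ℂ :=
  Fin.snoc (evalAffC x t) 1

/-- The affine form of the projection, acting on affine (complex) points. -/
def projAffC (n a : Fin 4 → ℝ) (p : Fin 3 → ℂ) : Fin 3 → ℂ :=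
  fun i => projHC (cmap4 n) (cmap4 a) (Fin.snoc p 1) i.castSucc /
    projHC (cmap4 n) (cmap4 a) (Fin.snoc p 1) 3

/-- The parameter values `t`, `s` are related by the projection from the eye point `a`
onto the plane `n`: the projection maps `x1(t)` to `x2(s)`. -/
def RelatedByProj (n a : Fin 4 → ℝ) (x1 x2 : Fin 3 → RatFunc ℝ) (t s : ℂ) : Prop :=
  DomC x1 t ∧ DomC x2 s ∧
    ∃ lam : ℂ, lam ≠ 0 ∧ projHC (cmap4 n) (cmap4 a) (homC x1 t) = lam • homC x2 s

/-- `C2` (parametrized by `x2`) is the projection of `C1` (parametrized by `x1`)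
from the eye point `a` onto the plane `n`: every point of `C2` (up to finitely many)
is the projection of some point of `C1`.  The eye point is a nonzero vector of `ℝ⁴`
(projective coordinates) not lying on the plane. -/
def IsProjectionOf (n a : Fin 4 → ℝ) (x1 x2 : Fin 3 → RatFunc ℝ) : Prop :=
  a ≠ 0 ∧ (∑ i, n i * a i) ≠ 0 ∧
    ∀ᶠ s : ℂ in cofinite, ∃ t : ℂ, RelatedByProj n a x1 x2 t s

/-- The projection, restricted to `C1`, is injective for almost all points of `C2`. -/
def NonDegenerateProj (n a : Fin 4 → ℝ) (x1 x2 : Fin 3 → RatFunc ℝ) : Prop :=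
  ∀ᶠ s : ℂ in cofinite, ∃! t : ℂ, RelatedByProj n a x1 x2 t s

/-- `ψ` is associated with the projection:  `P_ã ∘ x1 = x2 ∘ ψ`. -/
def AssociatedRF (n a : Fin 4 → ℝ) (x1 x2 : Fin 3 → RatFunc ℝ) (ψ : RatFunc ℝ) : Prop :=
  ∀ᶠ t : ℂ in cofinite, RelatedByProj n a x1 x2 t (RFevalC ψ t)

/-- `N(t,s)·(x1(t) − x2(s)) = det(x1(t) − x2(s), x1'(t), x2'(s))`,
where `N(t,s) = x1'(t) × x2'(s)`, evaluated at the complex pair `(t,s)`. -/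
def NdotC (x1 x2 : Fin 3 → RatFunc ℝ) (t s : ℂ) : ℂ :=
  dotProduct
    (crossProduct (fun i => RFevalC (RFderiv (x1 i)) t) (fun i => RFevalC (RFderiv (x2 i)) s))
    (fun i => RFevalC (x1 i) t - RFevalC (x2 i) s)

/-- Evaluation of a bivariate real polynomial at a complex point `(t,s)`. -/
def aeval2 (t s : ℂ) (F : MvPolynomial (Fin 2) ℝ) : ℂ := MvPolynomial.aeval ![t, s] F

/-- `Ncal` is (a representative of) the square-free part of the numerator of the
bivariate rational function `N(t,s)·(x1(t) − x2(s))`: it is square-free and has the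
same zero set. -/
def IsNcal (x1 x2 : Fin 3 → RatFunc ℝ) (Ncal : MvPolynomial (Fin 2) ℝ) : Prop :=
  Squarefree Ncal ∧
    ∀ t s : ℂ, DomC x1 t → DomC x2 s → (aeval2 t s Ncal = 0 ↔ NdotC x1 x2 t s = 0)

/-- The polynomial `G(t,s) = p(t) − s·q(t)` associated with `ψ = p/q`;
variable `0` is `t` and variable `1` is `s`. -/
def assocPoly (ψ : RatFunc ℝ) : MvPolynomial (Fin 2) ℝ :=
  Polynomial.aeval (MvPolynomial.X 0) ψ.num -
    MvPolynomial.X 1 * Polynomial.aeval (MvPolynomial.X 0) ψ.denom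

/-- `(t,s)` is a singular point of the plane curve `𝒩* : Ncal = 0`. -/
def SingPt (Ncal : MvPolynomial (Fin 2) ℝ) (t s : ℂ) : Prop :=
  aeval2 t s Ncal = 0 ∧ aeval2 t s (MvPolynomial.pderiv 0 Ncal) = 0 ∧
    aeval2 t s (MvPolynomial.pderiv 1 Ncal) = 0

/-- `p` is the limit point `P^∞ = lim_{t→∞} x(t)` of the parametrization `x`. -/
def IsLimitPoint (x : Fin 3 → RatFunc ℝ) (p : Fin 3 → ℂ) : Prop :=
  Filter.Tendsto (evalAffC x) (Filter.cocompact ℂ) (nhds p)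

/-- `q` is a self-intersection of the curve parametrized by `x`. -/
def SelfIntersection (x : Fin 3 → RatFunc ℝ) (q : Fin 3 → ℂ) : Prop :=
  ∃ s1 s2 : ℂ, s1 ≠ s2 ∧ DomC x s1 ∧ DomC x s2 ∧ evalAffC x s1 = q ∧ evalAffC x s2 = q

/-- The pair `(x1(t0), x2(s0))` is lucky. -/
def LuckyPair (x1 x2 : Fin 3 → RatFunc ℝ) (Ncal : MvPolynomial (Fin 2) ℝ)
    (t0 s0 : ℂ) : Prop :=
  evalAffC x1 t0 ≠ evalAffC x2 s0 ∧
  ¬ IsLimitPoint x1 (evalAffC x1 t0) ∧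
  ¬ IsLimitPoint x2 (evalAffC x2 s0) ∧
  ¬ SelfIntersection x2 (evalAffC x2 s0) ∧
  ¬ ∃ s' : ℂ, SingPt Ncal t0 s'


/-!
For all but finitely many `t` the projection identity `x₂(ψ(t)) = x₁(t) + μ(t) • w(t)` holds,
`w(t)` being the direction from `x₁(t)` to the eye point; these `t` form an open set, so the
identity can be differentiated. That puts `ψ'(t) • x₂'(ψ(t))` in the span of `x₁'(t)` and `w(t)`,
while `x₁(t) − x₂(ψ(t))` is a multiple of `w(t)`; so the triple product
`N(t, ψ(t)) · (x₁(t) − x₂(ψ(t)))` vanishes wherever `ψ'(t) ≠ 0`. And `ψ' ≢ 0`: for constant `ψ`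
almost all of `C₁` would project to a single point, against properness of `x₂` and
surjectivity of the projection. Hence `𝒩(t, ψ(t)) = 0` for infinitely many `t`, i.e. `s = ψ` is a
root of `𝒩` over `ℝ(t)`. Finally `G = p − s q` is primitive in `ℝ[t][s]` and associated to
`s − ψ` over `ℝ(t)`, so Gauss's lemma gives `G ∣ 𝒩`.
-/

open scoped Polynomial.Bivariate

theorem crossProduct_dotProduct_smul_eq_zero {K : Type*} [Field K] {u v w : Fin 3 → K}
    {d α β : K} (hd : d ≠ 0) (hv : d • v = α • w + β • u) (γ : K) :
    crossProduct u v ⬝ᵥ (γ • w) = 0 := by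
  have hv' : v = d⁻¹ • (α • w + β • u) := by rw [← hv, inv_smul_smul₀ hd]
  rw [hv', LinearMap.map_smul, LinearMap.map_add, LinearMap.map_smul, LinearMap.map_smul,
    cross_self, smul_zero, add_zero, smul_dotProduct, smul_dotProduct, dotProduct_smul,
    dotProduct_comm, dot_cross_self, smul_zero, smul_zero, smul_zero]

section GaussLemma

variable {R : Type*} [CommRing R]

theorem isPrimitive_C_sub_X_mul_C {p q : R} (h : IsCoprime p q) :
    (C p - X * C q : R[X]).IsPrimitive := by
  intro r hr
  have hp : r ∣ p := by simpa using (C_dvd_iff_dvd_coeff r _).1 hr 0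
  have hq : r ∣ q := by simpa using (C_dvd_iff_dvd_coeff r _).1 hr 1
  obtain ⟨u, v, huv⟩ := h
  exact isUnit_of_dvd_one (huv ▸ dvd_add (hp.mul_left u) (hq.mul_left v))

variable [IsDomain R] [NormalizedGCDMonoid R] {K : Type*} [Field K] [Algebra R K]
  [IsFractionRing R K]

theorem C_sub_X_mul_C_dvd_of_eval₂_eq_zero {p q : R} (hpq : IsCoprime p q) (hq : q ≠ 0)
    {N : R[X]} (hN : N.eval₂ (algebraMap R K) (algebraMap R K p / algebraMap R K q) = 0) :
    C p - X * C q ∣ N := by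
  have hqK : algebraMap R K q ≠ 0 := (map_ne_zero_iff _ (IsFractionRing.injective R K)).2 hq
  refine (isPrimitive_C_sub_X_mul_C hpq).dvd_of_fraction_map_dvd_fraction_map (K := K) ?_
  have hmap : (C p - X * C q).map (algebraMap R K) =
      C (-algebraMap R K q) * (X - C (algebraMap R K p / algebraMap R K q)) := by
    rw [mul_sub, ← C_mul, neg_mul, mul_div_cancel₀ _ hqK]
    simp only [Polynomial.map_sub, Polynomial.map_mul, map_C, map_X, C_neg]
    ring
  rw [hmap, (isUnit_C.2 (neg_ne_zero.2 hqK).isUnit).mul_left_dvd]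
  exact dvd_iff_isRoot.2 (by rwa [IsRoot, eval_map])

end GaussLemma

theorem RFevalC_eq_aeval_div (f : RatFunc ℝ) (z : ℂ) :
    RFevalC f z = aeval z f.num / aeval z f.denom := by
  simp only [RFevalC, eval_map_algebraMap]

section AevalZeros

variable {R A : Type*} [CommRing R] [Field A] [Algebra R A] [FaithfulSMul R A] {p : R[X]}

theorem eventually_aeval_ne_zero (hp : p ≠ 0) : ∀ᶠ z : A in cofinite, aeval z p ≠ 0 := by
  have hmap : p.map (algebraMap R A) ≠ 0 :=
    (Polynomial.map_ne_zero_iff (FaithfulSMul.algebraMap_injective R A)).2 hp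
  simpa [IsRoot, eval_map_algebraMap] using finite_setOfPred_isRoot hmap

theorem eq_zero_of_eventually_aeval_eq_zero [Infinite A]
    (h : ∀ᶠ z : A in cofinite, aeval z p = 0) : p = 0 := by
  by_contra hp
  obtain ⟨z, hz, hz'⟩ := (h.and (eventually_aeval_ne_zero hp)).exists
  exact hz' hz

end AevalZeros

theorem RFevalC_algebraMap_div (p : ℝ[X]) {q : ℝ[X]} (hq : q ≠ 0) {z : ℂ}
    (hz : aeval z q ≠ 0) :
    RFevalC (algebraMap ℝ[X] (RatFunc ℝ) p / algebraMap _ _ q) z = aeval z p / aeval z q := by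
  set f := algebraMap ℝ[X] (RatFunc ℝ) p / algebraMap _ _ q
  have hdenom : aeval z f.denom ≠ 0 := fun h0 =>
    hz (zero_dvd_iff.1 (h0 ▸ map_dvd (aeval z) (RatFunc.denom_div_dvd p q)))
  have hcross : f.num * q = p * f.denom := (RatFunc.num_mul_eq_mul_denom_iff hq).2 rfl
  rw [RFevalC_eq_aeval_div, div_eq_div_iff hdenom hz, ← _root_.map_mul, ← _root_.map_mul, hcross]

theorem hasDerivAt_aeval (p : ℝ[X]) (z : ℂ) :
    HasDerivAt (fun w : ℂ => aeval w p) (aeval z (derivative p)) z := by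
  simpa only [← eval_map_algebraMap, derivative_map] using (p.map (algebraMap ℝ ℂ)).hasDerivAt z

theorem hasDerivAt_RFevalC (f : RatFunc ℝ) {z : ℂ} (hz : aeval z f.denom ≠ 0) :
    HasDerivAt (RFevalC f) (RFevalC (RFderiv f) z) z := by
  have hq2 : aeval z (f.denom ^ 2) ≠ 0 := by rw [_root_.map_pow]; exact pow_ne_zero 2 hz
  have hval := RFevalC_algebraMap_div (derivative f.num * f.denom - f.num * derivative f.denom)
    (pow_ne_zero 2 f.denom_ne_zero) hq2
  rw [show RFevalC f = fun w => aeval w f.num / aeval w f.denom from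
      funext (RFevalC_eq_aeval_div f),
    RFderiv, ← _root_.map_mul, ← _root_.map_mul, ← _root_.map_sub, hval]
  refine ((hasDerivAt_aeval f.num z).div (hasDerivAt_aeval f.denom z) hz).congr_deriv ?_
  simp only [_root_.map_sub, _root_.map_mul, _root_.map_pow]

theorem RFevalC_const_of_RFderiv_eq_zero {f : RatFunc ℝ} (h : RFderiv f = 0) (z w : ℂ) :
    RFevalC f z = RFevalC f w := by
  have hwr : derivative f.num * f.denom - f.num * derivative f.denom = 0 := by
    rw [RFderiv, ← _root_.map_mul, ← _root_.map_mul, ← _root_.map_sub, div_eq_zero_iff] at h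
    exact h.resolve_right (RatFunc.algebraMap_ne_zero (pow_ne_zero 2 f.denom_ne_zero)) |>
      (map_eq_zero_iff _ (IsFractionRing.injective ℝ[X] (RatFunc ℝ))).1
  have hdvd : f.denom ∣ derivative f.denom :=
    (RatFunc.isCoprime_num_denom f).symm.dvd_of_dvd_mul_left
      ⟨derivative f.num, by linear_combination -hwr⟩
  have hdenom' : derivative f.denom = 0 :=
    eq_zero_of_dvd_of_degree_lt hdvd (degree_derivative_lt f.denom_ne_zero)
  have hdenom : f.denom = 1 :=
    f.monic_denom.natDegree_eq_zero.1 (derivative_eq_zero.1 hdenom')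
  have hnum : f.num = C (f.num.coeff 0) := by
    refine eq_C_of_derivative_eq_zero ?_
    simpa [hdenom', hdenom] using hwr
  rw [RFevalC_eq_aeval_div, RFevalC_eq_aeval_div, hdenom, hnum]
  simp only [aeval_C, _root_.map_one]

theorem equivMvPolynomial_C {R : Type*} [CommSemiring R] (p : R[X]) :
    Bivariate.equivMvPolynomial R (C p) = aeval (MvPolynomial.X 0) p := by
  have h : (Bivariate.equivMvPolynomial R).toAlgHom.comp CAlgHom = aeval (MvPolynomial.X 0) :=
    Polynomial.algHom_ext (by simp)
  exact AlgHom.congr_fun h p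

theorem assocPoly_eq_equivMvPolynomial (ψ : RatFunc ℝ) :
    assocPoly ψ = Bivariate.equivMvPolynomial ℝ (C ψ.num - X * C ψ.denom) := by
  simp only [assocPoly, _root_.map_sub, _root_.map_mul, equivMvPolynomial_C,
    Bivariate.equivMvPolynomial_X]

theorem aeval2_equivMvPolynomial (z s : ℂ) (P : ℝ[X][Y]) :
    aeval2 z s (Bivariate.equivMvPolynomial ℝ P) = P.eval₂ (aeval z).toRingHom s := by
  have hhom : (MvPolynomial.aeval ![z, s]).toRingHom.comp
      (Bivariate.equivMvPolynomial ℝ).toRingHom = eval₂RingHom (aeval z).toRingHom s :=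
    Polynomial.ringHom_ext (fun p => by simp [equivMvPolynomial_C, ← aeval_algHom_apply])
      (by simp)
  exact RingHom.congr_fun hhom P

theorem eval₂_algebraMap_eq_zero_of_eventually {P : ℝ[X][Y]} {ψ : RatFunc ℝ}
    (h : ∀ᶠ z : ℂ in cofinite, P.eval₂ (aeval z).toRingHom (RFevalC ψ z) = 0) :
    P.eval₂ (algebraMap ℝ[X] (RatFunc ℝ)) ψ = 0 := by
  have hQ : (P.scaleRoots ψ.denom).eval ψ.num = 0 := by
    refine eq_zero_of_eventually_aeval_eq_zero (A := ℂ) ?_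
    filter_upwards [h, eventually_aeval_ne_zero ψ.denom_ne_zero] with z hz hden
    have hnum : (aeval z).toRingHom ψ.denom * RFevalC ψ z = (aeval z).toRingHom ψ.num := by
      rw [RFevalC_eq_aeval_div]
      exact mul_div_cancel₀ _ hden
    change (aeval z).toRingHom _ = 0
    rw [← eval₂_at_apply, ← hnum, scaleRoots_eval₂_mul, hz, mul_zero]
  have hnum : algebraMap ℝ[X] (RatFunc ℝ) ψ.denom * ψ = algebraMap _ _ ψ.num := by
    rw [mul_comm, ← eq_div_iff (RatFunc.algebraMap_ne_zero ψ.denom_ne_zero),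
      RatFunc.num_div_denom]
  have hK := scaleRoots_eval₂_mul (p := P) (algebraMap ℝ[X] (RatFunc ℝ)) ψ ψ.denom
  rw [hnum, eval₂_at_apply, hQ, _root_.map_zero, eq_comm, mul_eq_zero] at hK
  exact hK.resolve_left (pow_ne_zero _ (RatFunc.algebraMap_ne_zero ψ.denom_ne_zero))

section Projection

variable {n a : Fin 4 → ℝ} {x x1 x2 : Fin 3 → RatFunc ℝ} {ψ : RatFunc ℝ} {t s z : ℂ}

def planeValue (n : Fin 4 → ℝ) (x : Fin 3 → RatFunc ℝ) (t : ℂ) : ℂ :=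
  ∑ j, cmap4 n j * homC x t j

/-- Affine part of `ã − a₃ • (x(t), 1)`: the direction of the line through `x(t)` and the
eye point, also when the eye point is at infinity (`a₃ = 0`). -/
def eyeDir (a : Fin 4 → ℝ) (x : Fin 3 → RatFunc ℝ) (t : ℂ) : Fin 3 → ℂ :=
  fun i => cmap4 a i.castSucc - cmap4 a 3 * RFevalC (x i) t

def projRatio (n a : Fin 4 → ℝ) (x : Fin 3 → RatFunc ℝ) (t : ℂ) : ℂ :=
  planeValue n x t / (planeValue n x t * cmap4 a 3 - ∑ j, cmap4 n j * cmap4 a j)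

@[simp]
theorem homC_last : homC x t 3 = 1 := Fin.snoc_last _ _

@[simp]
theorem homC_castSucc (i : Fin 3) : homC x t i.castSucc = RFevalC (x i) t :=
  Fin.snoc_castSucc _ _ _

theorem RelatedByProj.exists_coords (h : RelatedByProj n a x1 x2 t s) :
    ∃ lam ≠ 0, planeValue n x1 t * cmap4 a 3 - ∑ j, cmap4 n j * cmap4 a j = lam ∧
      ∀ i : Fin 3, planeValue n x1 t * cmap4 a i.castSucc -
        (∑ j, cmap4 n j * cmap4 a j) * RFevalC (x1 i) t = lam * RFevalC (x2 i) s := by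
  obtain ⟨-, -, lam, hlam, heq⟩ := h
  refine ⟨lam, hlam, ?_, fun i => ?_⟩
  · simpa [projHC, planeValue] using congrFun heq 3
  · simpa [projHC, planeValue] using congrFun heq i.castSucc

theorem RelatedByProj.denom_ne_zero (h : RelatedByProj n a x1 x2 t s) :
    planeValue n x1 t * cmap4 a 3 - ∑ j, cmap4 n j * cmap4 a j ≠ 0 := by
  obtain ⟨lam, hlam, hlast, -⟩ := h.exists_coords
  exact hlast ▸ hlam

theorem RelatedByProj.evalAffC_eq (h : RelatedByProj n a x1 x2 t s) :
    evalAffC x2 s = evalAffC x1 t + projRatio n a x1 t • eyeDir a x1 t := by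
  obtain ⟨_, hlam, rfl, hcoord⟩ := h.exists_coords
  funext i
  simp only [Pi.add_apply, Pi.smul_apply, smul_eq_mul, evalAffC, projRatio, eyeDir]
  field_simp
  linear_combination -hcoord i

theorem RelatedByProj.evalAffC_eq_of_related {s' : ℂ} (h : RelatedByProj n a x1 x2 t s)
    (h' : RelatedByProj n a x1 x2 t s') : evalAffC x2 s = evalAffC x2 s' :=
  h.evalAffC_eq.trans h'.evalAffC_eq.symm

theorem DomC.aeval_ne_zero (h : DomC x z) (i : Fin 3) : aeval z (x i).denom ≠ 0 := by
  simpa only [eval_map_algebraMap] using h i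

theorem differentiableAt_planeValue (hz : DomC x z) : DifferentiableAt ℂ (planeValue n x) z := by
  have hcoord : ∀ j, DifferentiableAt ℂ (fun t => homC x t j) z := by
    refine Fin.lastCases ?_ fun i => ?_
    · simp only [homC, Fin.snoc_last]
      exact differentiableAt_const _
    · simp only [homC_castSucc]
      exact (hasDerivAt_RFevalC (x i) (hz.aeval_ne_zero i)).differentiableAt
  unfold planeValue
  fun_prop

theorem differentiableAt_projRatio (hz : DomC x z)
    (hden : planeValue n x z * cmap4 a 3 - ∑ j, cmap4 n j * cmap4 a j ≠ 0) :
    DifferentiableAt ℂ (projRatio n a x) z := by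
  have := differentiableAt_planeValue (n := n) hz
  unfold projRatio
  fun_prop (disch := exact hden)

theorem NdotC_eq_zero_of_eventually_related
    (hrel : ∀ᶠ τ in nhds z, RelatedByProj n a x1 x2 τ (RFevalC ψ τ))
    (hψ : aeval z ψ.denom ≠ 0) (hψ' : RFevalC (RFderiv ψ) z ≠ 0) :
    NdotC x1 x2 z (RFevalC ψ z) = 0 := by
  have hz := hrel.self_of_nhds
  set μ := projRatio n a x1
  obtain ⟨μ', hμ⟩ : ∃ μ', HasDerivAt μ μ' z :=
    ⟨_, (differentiableAt_projRatio hz.1 hz.denom_ne_zero).hasDerivAt⟩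
  have htangent : RFevalC (RFderiv ψ) z • (fun i => RFevalC (RFderiv (x2 i)) (RFevalC ψ z)) =
      μ' • eyeDir a x1 z + (1 - μ z * cmap4 a 3) • fun i => RFevalC (RFderiv (x1 i)) z := by
    funext i
    have hx1 := hasDerivAt_RFevalC (x1 i) (hz.1.aeval_ne_zero i)
    have hcomp := (hasDerivAt_RFevalC (x2 i) (hz.2.1.aeval_ne_zero i)).comp z
      (hasDerivAt_RFevalC ψ hψ)
    have hsum := hx1.add (hμ.mul ((hx1.const_mul (cmap4 a 3)).const_sub (cmap4 a i.castSucc)))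
    have := hcomp.unique (hsum.congr_of_eventuallyEq
      (hrel.mono fun τ hτ => congrFun hτ.evalAffC_eq i))
    simp only [Pi.smul_apply, Pi.add_apply, smul_eq_mul, eyeDir]
    linear_combination this
  have hchord : (fun i => RFevalC (x1 i) z - RFevalC (x2 i) (RFevalC ψ z)) =
      (-μ z) • eyeDir a x1 z := by
    funext i
    have h := congrFun hz.evalAffC_eq i
    simp only [evalAffC, Pi.add_apply, Pi.smul_apply, smul_eq_mul] at h
    simp only [h, Pi.smul_apply, smul_eq_mul]
    ring
  rw [NdotC, hchord]
  exact crossProduct_dotProduct_smul_eq_zero hψ' htangent _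

theorem not_eventually_relatedByProj_const (hx2 : ProperParam x2)
    (hcover : ∀ᶠ s : ℂ in cofinite, ∃ t, RelatedByProj n a x1 x2 t s) (α : ℂ) :
    ¬ ∀ᶠ t : ℂ in cofinite, RelatedByProj n a x1 x2 t α := by
  intro hα
  set B := {s : ℂ | DomC x2 s ∧ ∃ s', s' ≠ s ∧ DomC x2 s' ∧ evalAffC x2 s' = evalAffC x2 s}
  set U := ⋃ t ∈ {t | ¬ RelatedByProj n a x1 x2 t α}, {s | RelatedByProj n a x1 x2 t s ∧ s ∉ B}
  have hU : U.Finite := (eventually_cofinite.1 hα).biUnion fun t _ =>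
    Set.Subsingleton.finite fun s hs s' hs' => by_contra fun hne =>
      hs.2 ⟨hs.1.2.1, s', Ne.symm hne, hs'.1.2.1, (hs.1.evalAffC_eq_of_related hs'.1).symm⟩
  have hmem : ∀ᶠ s : ℂ in cofinite, s ∈ U := by
    filter_upwards [hcover, (hx2 : B.Finite).eventually_cofinite_notMem,
      (Set.finite_singleton α).eventually_cofinite_notMem] with s ⟨t, ht⟩ hsB hsα
    refine Set.mem_biUnion (x := t) (fun htα => hsB ?_) ⟨ht, hsB⟩
    exact ⟨ht.2.1, α, fun h => hsα h.symm, htα.2.1, (ht.evalAffC_eq_of_related htα).symm⟩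
  obtain ⟨s, hsU, hsU'⟩ := (hmem.and hU.eventually_cofinite_notMem).exists
  exact hsU' hsU

theorem RFderiv_ne_zero_of_associatedRF (hx2 : ProperParam x2)
    (hproj : IsProjectionOf n a x1 x2) (hψ : AssociatedRF n a x1 x2 ψ) : RFderiv ψ ≠ 0 :=
  fun h => not_eventually_relatedByProj_const hx2 hproj.2.2 (RFevalC ψ 0)
    (hψ.mono fun t ht => RFevalC_const_of_RFderiv_eq_zero h t 0 ▸ ht)

theorem eventually_NdotC_eq_zero (hψ : AssociatedRF n a x1 x2 ψ) (hd : RFderiv ψ ≠ 0) :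
    ∀ᶠ z : ℂ in cofinite, DomC x1 z ∧ DomC x2 (RFevalC ψ z) ∧
      NdotC x1 x2 z (RFevalC ψ z) = 0 := by
  have hopen : IsOpen {t | RelatedByProj n a x1 x2 t (RFevalC ψ t)} :=
    isClosed_compl_iff.1 <| by
      simpa only [Set.compl_ofPred] using (eventually_cofinite.1 hψ).isClosed
  filter_upwards [hψ, eventually_aeval_ne_zero ψ.denom_ne_zero,
    eventually_aeval_ne_zero (RatFunc.num_ne_zero hd),
    eventually_aeval_ne_zero (RFderiv ψ).denom_ne_zero] with z hz hψden hdnum hdden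
  refine ⟨hz.1, hz.2.1, NdotC_eq_zero_of_eventually_related (hopen.mem_nhds hz) hψden ?_⟩
  rw [RFevalC_eq_aeval_div]
  exact div_ne_zero hdnum hdden

end Projection

theorem statement_4_general (x1 x2 : Fin 3 → RatFunc ℝ) (n a : Fin 4 → ℝ) (ψ : RatFunc ℝ)
    (Ncal : MvPolynomial (Fin 2) ℝ)
    (hx2 : ProperParam x2)
    (hproj : IsProjectionOf n a x1 x2)
    (hψ : AssociatedRF n a x1 x2 ψ)
    (hN : IsNcal x1 x2 Ncal) :
    assocPoly ψ ∣ Ncal := by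
  obtain ⟨-, hzeros⟩ := hN
  set P := (Bivariate.equivMvPolynomial ℝ).symm Ncal
  have hvanish : ∀ᶠ z : ℂ in cofinite, P.eval₂ (aeval z).toRingHom (RFevalC ψ z) = 0 := by
    filter_upwards [eventually_NdotC_eq_zero hψ (RFderiv_ne_zero_of_associatedRF hx2 hproj hψ)]
      with z ⟨hz1, hz2, hNdot⟩
    rw [← aeval2_equivMvPolynomial, AlgEquiv.apply_symm_apply]
    exact (hzeros z _ hz1 hz2).2 hNdot
  have hdvd : C ψ.num - X * C ψ.denom ∣ P :=
    C_sub_X_mul_C_dvd_of_eval₂_eq_zero (RatFunc.isCoprime_num_denom ψ) ψ.denom_ne_zero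
      (by rw [RatFunc.num_div_denom]; exact eval₂_algebraMap_eq_zero_of_eventually hvanish)
  rw [assocPoly_eq_equivMvPolynomial,
    ← AlgEquiv.apply_symm_apply (Bivariate.equivMvPolynomial ℝ) Ncal]
  exact map_dvd _ hdvd

/-- If `C2 = P_ã(C1)` and `G(t,s) = p(t) − s·q(t)` is the polynomial
associated with the projection `P_ã` (where `ψ = p/q` is the associated rational
function), then `G(t,s)` divides `𝒩(t,s)` in `ℝ[t,s]`, where `𝒩(t,s)` is the
square-free part of the numerator of `N(t,s)·(x1(t) − x2(s))`. -/
theorem statement_4 (x1 x2 : Fin 3 → RatFunc ℝ) (n a : Fin 4 → ℝ) (ψ : RatFunc ℝ)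
    (Ncal : MvPolynomial (Fin 2) ℝ)
    (hx1 : ProperParam x1) (hx2 : ProperParam x2)
    (hnl1 : ¬ IsLineParam x1) (hnl2 : ¬ IsLineParam x2)
    (hn : PlaneNormalNZ n) (hplane : InPlane x2 n)
    (hsame : ¬ ∃ m : Fin 4 → ℝ, PlaneNormalNZ m ∧ InPlane x1 m ∧ InPlane x2 m)
    (hproj : IsProjectionOf n a x1 x2)
    (hψ : AssociatedRF n a x1 x2 ψ)
    (hN : IsNcal x1 x2 Ncal) :
    assocPoly ψ ∣ Ncal :=
  statement_4_general x1 x2 n a ψ Ncal hx2 hproj hψ hN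
end
end

section
/- Let (p1,q1) and (p2,q2) be two different lucky pairs with pj ∈ C1, qj ∈ C2, pj = x1(tj), qj = x2(sj), tj, sj ∈ ℝ for j = 1,2, and with (t1,s1), (t2,s2) lying on the plane curve 𝒩*. If (t1,s1) and (t2,s2) are connected by one real branch of 𝒩* such that there is no point (t̂,ŝ) ∈ 𝒩* with t̂ ∈ [t1,t2] at which the partial derivative ∂𝒩/∂t vanishes, then there is at most one projection P_ã mapping C1 onto C2 such that P_ã(pj) = qj for both j = 1,2. -/
/-!
In homogeneous coordinates `P_a(p) ∼ q` reads `⟨n,p⟩ a - ⟨n,a⟩ p = λ q`; for `p ≠ q` this forces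
`⟨n,p⟩ ≠ 0` and puts the eye point `a` on the line `pq`. Any admissible eye point therefore lies on
both lines `p₁q₁` and `p₂q₂`. These lines are distinct, since `q₂ ∉ span {p₁, q₁}`: `q₁, q₂ ∈ Π`,
`p₁ ∉ Π` and `q₁ ≠ q₂`. Two distinct projective lines meet in at most one point, which fixes `a`
up to a (necessarily real) scalar.

`q₁ = q₂` is excluded as follows. If `s₁ ≠ s₂` it would be a self-intersection of `C₂`. If
`s₁ = s₂` but `t₁ ≠ t₂`, the branch `φ` has an interior extremum `c`; near `c` two different
abscissae carry the same ordinate, and Rolle's theorem in `t` produces a zero of `∂𝒩/∂t` arbitrarily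
close to the regular point `(c, φ c)` of the branch.
-/

noncomputable section

open Polynomial Filter Matrix

open Set Topology Submodule Module

theorem exists_mem_Ioo_forall_mem_nhds_not_injOn {f : ℝ → ℝ} {a b : ℝ} (hab : a < b)
    (hf : ContinuousOn f (Icc a b)) (hfab : f a = f b) :
    ∃ c ∈ Ioo a b, ∀ U ∈ 𝓝 c, ¬ InjOn f U := by
  obtain ⟨c, hc, hext⟩ := exists_Ioo_extr_on_Icc hab hf hfab
  refine ⟨c, hc, fun U hU hinj => ?_⟩
  obtain ⟨A, B, hAc, hcB, hAB⟩ : ∃ A B, A < c ∧ c < B ∧ Icc A B ⊆ U ∩ Icc a b := by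
    obtain ⟨η, hη, hball⟩ := Metric.mem_nhds_iff.1 (inter_mem hU (Icc_mem_nhds hc.1 hc.2))
    refine ⟨c - η / 2, c + η / 2, by linarith, by linarith, ?_⟩
    rw [← Real.closedBall_eq_Icc]
    exact (Metric.closedBall_subset_ball (half_lt_self hη)).trans hball
  have hA : A ∈ Icc A B := left_mem_Icc.2 (hAc.trans hcB).le
  have hB : B ∈ Icc A B := right_mem_Icc.2 (hAc.trans hcB).le
  have hcont : ∀ y ∈ Icc A B, ContinuousOn f (uIcc c y) := fun y hy =>
    hf.mono ((ordConnected_Icc.uIcc_subset ⟨hAc.le, hcB.le⟩ hy).trans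
      (hAB.trans inter_subset_right))
  -- `f A` and `f B` lie on the same side of the extremal value `f c`
  have hside : f A ∈ uIcc (f c) (f B) ∨ f B ∈ uIcc (f c) (f A) := by
    have hA' := (hAB hA).2
    have hB' := (hAB hB).2
    simp only [mem_uIcc]
    rcases hext with h | h <;> have := h hA' <;> have := h hB' <;>
      rcases le_total (f A) (f B) with h' | h' <;> simp_all
  rcases hside with h | h
  · obtain ⟨v, hv, hfv⟩ := intermediate_value_uIcc (hcont B hB) h
    rw [uIcc_of_le hcB.le] at hv
    have hAv : A < v := hAc.trans_le hv.1
    exact hAv.ne (hinj (hAB hA).1 (hAB ⟨hAv.le, hv.2⟩).1 hfv.symm)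
  · obtain ⟨u, hu, hfu⟩ := intermediate_value_uIcc (hcont A hA) h
    rw [uIcc_of_ge hAc.le] at hu
    have huB : u < B := hu.2.trans_lt hcB
    exact huB.ne (hinj (hAB ⟨hu.1, huB.le⟩).1 (hAB hB).1 hfu)

namespace MvPolynomial

theorem continuous_aeval_vecCons (F : MvPolynomial (Fin 2) ℝ) :
    Continuous fun p : ℝ × ℝ => aeval ![p.1, p.2] F :=
  (continuous_eval F).comp (continuous_fst.matrixVecCons
    (continuous_snd.matrixVecCons continuous_const))

theorem hasDerivAt_aeval_vecCons (F : MvPolynomial (Fin 2) ℝ) (t s : ℝ) :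
    HasDerivAt (fun u : ℝ => aeval ![u, s] F) (aeval ![t, s] (pderiv 0 F)) t := by
  induction F using MvPolynomial.induction_on with
  | C a => simpa using hasDerivAt_const t a
  | add p q hp hq => simp only [map_add]; exact hp.add hq
  | mul_X p i hp =>
    fin_cases i
    · simp only [map_mul, aeval_X]
      exact (hp.mul (hasDerivAt_id' t)).congr_deriv (by simp [Derivation.leibniz]; ring)
    · simp only [map_mul, aeval_X]
      exact (hp.mul_const s).congr_deriv (by simp [Derivation.leibniz]; ring)

theorem exists_mem_nhds_injOn_of_pderiv_ne_zero (F : MvPolynomial (Fin 2) ℝ) {φ : ℝ → ℝ}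
    {t₀ : ℝ} (hφ : ContinuousAt φ t₀) (hcurve : ∀ᶠ t in 𝓝 t₀, aeval ![t, φ t] F = 0)
    (hreg : aeval ![t₀, φ t₀] (pderiv 0 F) ≠ 0) :
    ∃ U ∈ 𝓝 t₀, InjOn φ U := by
  obtain ⟨δ, hδ, hbox⟩ := Metric.eventually_nhds_iff_ball.1
    ((continuous_aeval_vecCons (pderiv 0 F)).continuousAt.eventually_ne
      (x := (t₀, φ t₀)) hreg)
  set I := Metric.ball t₀ δ
  refine ⟨I ∩ φ ⁻¹' Metric.ball (φ t₀) δ ∩ {t | aeval ![t, φ t] F = 0},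
    inter_mem (inter_mem (Metric.ball_mem_nhds _ hδ)
      (hφ.preimage_mem_nhds (Metric.ball_mem_nhds _ hδ))) hcurve, ?_⟩
  have hno_chord : ∀ u ∈ I, ∀ v ∈ I, u < v → φ u ∈ Metric.ball (φ t₀) δ →
      aeval ![u, φ u] F = 0 → aeval ![v, φ u] F = 0 → False := by
    intro u hu v hv huv hφu hFu hFv
    obtain ⟨c, hc, hc0⟩ := exists_hasDerivAt_eq_zero huv
      ((continuous_aeval_vecCons F).comp (continuous_id.prodMk continuous_const)).continuousOn
      (hFu.trans hFv.symm) (fun x _ => hasDerivAt_aeval_vecCons F x (φ u))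
    refine hbox (c, φ u) ?_ hc0
    rw [← ball_prod_same]
    exact ⟨(convex_ball t₀ δ).ordConnected.out hu hv (Ioo_subset_Icc_self hc), hφu⟩
  rintro u ⟨⟨hu, hφu⟩, hFu⟩ v ⟨⟨hv, hφv⟩, hFv⟩ huv
  rcases lt_trichotomy u v with h | h | h
  · exact (hno_chord u hu v hv h hφu hFu (huv ▸ hFv)).elim
  · exact h
  · exact (hno_chord v hv u hu h hφv hFv (huv ▸ hFu)).elim

theorem apply_ne_apply_of_branch (F : MvPolynomial (Fin 2) ℝ) {φ : ℝ → ℝ} {t₁ t₂ : ℝ}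
    (ht : t₁ ≠ t₂) (hφ : ContinuousOn φ (uIcc t₁ t₂))
    (hcurve : ∀ t ∈ uIcc t₁ t₂, aeval ![t, φ t] F = 0)
    (hreg : ∀ t ∈ uIcc t₁ t₂, aeval ![t, φ t] (pderiv 0 F) ≠ 0) :
    φ t₁ ≠ φ t₂ := by
  intro heq
  have hends : φ (t₁ ⊓ t₂) = φ (t₁ ⊔ t₂) := by
    rcases le_total t₁ t₂ with h | h <;> simp [h, heq]
  obtain ⟨c, hc, hnot⟩ := exists_mem_Ioo_forall_mem_nhds_not_injOn (inf_lt_sup.2 ht) hφ hends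
  have hnhds : uIcc t₁ t₂ ∈ 𝓝 c := Icc_mem_nhds hc.1 hc.2
  obtain ⟨U, hU, hinj⟩ := exists_mem_nhds_injOn_of_pderiv_ne_zero F (hφ.continuousAt hnhds)
    (eventually_of_mem hnhds hcurve) (hreg c (mem_of_mem_nhds hnhds))
  exact hnot U hU hinj

end MvPolynomial

theorem mem_span_singleton_of_mem_inf_span_pair {K V : Type*} [Field K] [AddCommGroup V]
    [Module K V] {p₁ q₁ p₂ q₂ u v : V}
    (hu : u ∈ span K {p₁, q₁} ⊓ span K {p₂, q₂}) (hv : v ∈ span K {p₁, q₁} ⊓ span K {p₂, q₂})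
    (hu0 : u ≠ 0) (hq₂ : q₂ ∉ span K {p₁, q₁}) :
    v ∈ K ∙ u := by
  set W := span K {p₁, q₁} ⊓ span K {p₂, q₂}
  have hlt : W < span K {p₂, q₂} := inf_le_right.lt_of_ne fun h =>
    hq₂ (inf_eq_right.1 h (subset_span (by simp)))
  have : FiniteDimensional K (span K {p₂, q₂}) :=
    FiniteDimensional.span_of_finite K (Set.toFinite _)
  have hpair : finrank K (span K {p₂, q₂}) ≤ 2 := by
    classical
    exact (finrank_span_le_card _).trans (by simpa using Finset.card_le_two)
  have : FiniteDimensional K W := Submodule.finiteDimensional_of_le hlt.le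
  have hW : finrank K W ≤ 1 := by
    have := finrank_lt_finrank_of_lt hlt
    omega
  have hspan : K ∙ u = W := eq_of_le_of_finrank_le ((span_singleton_le_iff_mem u W).2 hu)
    (hW.trans (finrank_span_singleton hu0).ge)
  exact hspan ▸ hv

section HomogeneousCoordinates

variable {K : Type*} [Field K] {m : ℕ}

theorem eq_of_smul_snoc_one_eq_smul {p q : Fin m → K} {c d : K}
    (h : c • (Fin.snoc p 1 : Fin (m + 1) → K) = d • Fin.snoc q 1) (hc : c ≠ 0) : p = q := by
  have hcd : c = d := by simpa using congrFun h (Fin.last m)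
  subst hcd
  funext i
  simpa using congrFun (smul_right_injective _ hc h) i.castSucc

theorem mem_span_pair_of_smul_sub_smul_eq {V : Type*} [AddCommGroup V] [Module K V]
    {a p q : V} {c d l : K} (h : c • a - d • p = l • q) (hc : c ≠ 0) :
    a ∈ span K {p, q} := by
  rw [mem_span_pair]
  refine ⟨c⁻¹ * d, c⁻¹ * l, ?_⟩
  rw [mul_smul, mul_smul, ← smul_add, ← h, add_sub_cancel, smul_smul, inv_mul_cancel₀ hc,
    one_smul]

theorem dotProduct_snoc_ne_zero_of_smul_sub_smul_eq {n a : Fin (m + 1) → K} {p q : Fin m → K}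
    {l : K} (h : (n ⬝ᵥ Fin.snoc p 1) • a - (n ⬝ᵥ a) • Fin.snoc p 1 = l • Fin.snoc q 1)
    (hna : n ⬝ᵥ a ≠ 0) (hpq : p ≠ q) : n ⬝ᵥ Fin.snoc p 1 ≠ 0 := by
  intro h0
  rw [h0, zero_smul, zero_sub, ← neg_smul] at h
  exact hpq (eq_of_smul_snoc_one_eq_smul h (neg_ne_zero.2 hna))

theorem snoc_one_not_mem_span_pair {n P : Fin (m + 1) → K} {q₁ q₂ : Fin m → K}
    (hP : n ⬝ᵥ P ≠ 0) (hq₁ : n ⬝ᵥ Fin.snoc q₁ 1 = 0) (hq₂ : n ⬝ᵥ Fin.snoc q₂ 1 = 0)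
    (hq : q₁ ≠ q₂) : (Fin.snoc q₂ 1 : Fin (m + 1) → K) ∉ span K {P, Fin.snoc q₁ 1} := by
  rw [mem_span_pair]
  rintro ⟨α, β, hαβ⟩
  have hα : α * (n ⬝ᵥ P) = 0 := by
    simpa [dotProduct_add, dotProduct_smul, hq₁, hq₂] using congrArg (n ⬝ᵥ ·) hαβ
  rw [(mul_eq_zero.1 hα).resolve_right hP, zero_smul, zero_add] at hαβ
  refine hq (eq_of_smul_snoc_one_eq_smul (hαβ.trans (one_smul K _).symm) ?_)
  rintro rfl
  simpa using congrFun hαβ (Fin.last m)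

end HomogeneousCoordinates

theorem exists_real_smul_of_ofReal_eq_smul {ι : Type*} {a a' : ι → ℝ} {c : ℂ}
    (h : (fun i => (a' i : ℂ)) = c • fun i => (a i : ℂ)) (ha : a ≠ 0) (ha' : a' ≠ 0) :
    ∃ r : ℝ, r ≠ 0 ∧ a' = r • a := by
  obtain ⟨i, hi⟩ := Function.ne_iff.1 ha
  have hc : c = ((a' i / a i : ℝ) : ℂ) := by
    rw [Complex.ofReal_div, eq_div_iff (by exact_mod_cast hi)]
    exact (congrFun h i).symm
  have ha'_eq : a' = (a' i / a i) • a := by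
    funext j
    have hj := congrFun h j
    rw [hc] at hj
    simp only [Pi.smul_apply, smul_eq_mul] at hj ⊢
    exact_mod_cast hj
  exact ⟨a' i / a i, fun h0 => ha' (by rw [ha'_eq, h0, zero_smul]), ha'_eq⟩

theorem cmap4_ne_zero {v : Fin 4 → ℝ} (hv : v ≠ 0) : cmap4 v ≠ 0 := by
  intro h
  exact hv (funext fun i => by simpa [cmap4] using congrFun h i)

theorem cmap4_dotProduct_cmap4 (n a : Fin 4 → ℝ) :
    cmap4 n ⬝ᵥ cmap4 a = ((∑ i, n i * a i : ℝ) : ℂ) := by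
  simp [cmap4, dotProduct]

theorem Polynomial.aeval_ofReal_complex (p : ℝ[X]) (t : ℝ) : aeval (t : ℂ) p = p.eval t := by
  simpa using aeval_ofReal (K := ℂ) p t

theorem RFevalC_ofReal (f : RatFunc ℝ) (t : ℝ) : RFevalC f t = RFeval f t := by
  simp [RFevalC, RFeval, eval_map_algebraMap, aeval_ofReal_complex]

theorem DomC.domR {x : Fin 3 → RatFunc ℝ} {t : ℝ} (h : DomC x t) : DomR x t := by
  intro i h0
  apply h i
  simp [eval_map_algebraMap, aeval_ofReal_complex, h0]

theorem InPlane.dotProduct_homC_eq_zero {x : Fin 3 → RatFunc ℝ} {n : Fin 4 → ℝ}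
    (h : InPlane x n) {t : ℝ} (ht : DomC x t) : cmap4 n ⬝ᵥ homC x t = 0 := by
  have := h t ht.domR
  rw [dotProduct, Fin.sum_univ_castSucc]
  simp only [homC, cmap4, Fin.snoc_castSucc, Fin.snoc_last,
    evalAffC, RFevalC_ofReal, mul_one]
  exact_mod_cast this

section RelatedByProj

variable {n a : Fin 4 → ℝ} {x1 x2 : Fin 3 → RatFunc ℝ} {t s : ℂ}

theorem RelatedByProj.dotProduct_homC_ne_zero (h : RelatedByProj n a x1 x2 t s)
    (hna : ∑ i, n i * a i ≠ 0) (hne : evalAffC x1 t ≠ evalAffC x2 s) :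
    cmap4 n ⬝ᵥ homC x1 t ≠ 0 := by
  obtain ⟨-, -, l, -, hl⟩ := h
  exact dotProduct_snoc_ne_zero_of_smul_sub_smul_eq hl
    (by rw [cmap4_dotProduct_cmap4]; exact_mod_cast hna) hne

theorem RelatedByProj.eye_mem_span (h : RelatedByProj n a x1 x2 t s)
    (hna : ∑ i, n i * a i ≠ 0) (hne : evalAffC x1 t ≠ evalAffC x2 s) :
    cmap4 a ∈ span ℂ {homC x1 t, homC x2 s} := by
  have hP := h.dotProduct_homC_ne_zero hna hne
  obtain ⟨-, -, l, -, hl⟩ := h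
  exact mem_span_pair_of_smul_sub_smul_eq hl hP

end RelatedByProj

theorem statement_9_general (x1 x2 : Fin 3 → RatFunc ℝ) (n : Fin 4 → ℝ)
    (Ncal : MvPolynomial (Fin 2) ℝ)
    (hplane : InPlane x2 n)
    (t1 t2 s1 s2 : ℝ)
    (hpairsne : (evalAffC x1 (t1 : ℂ), evalAffC x2 (s1 : ℂ)) ≠
        (evalAffC x1 (t2 : ℂ), evalAffC x2 (s2 : ℂ)))
    (hlucky1 : LuckyPair x1 x2 Ncal (t1 : ℂ) (s1 : ℂ))
    (hlucky2 : LuckyPair x1 x2 Ncal (t2 : ℂ) (s2 : ℂ))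
    -- `(t1,s1)` and `(t2,s2)` are connected by one real branch of `𝒩*`
    (φ : ℝ → ℝ) (hφcont : ContinuousOn φ (Set.uIcc t1 t2))
    (hφ1 : φ t1 = s1) (hφ2 : φ t2 = s2)
    (hφcurve : ∀ t ∈ Set.uIcc t1 t2, MvPolynomial.aeval ![t, φ t] Ncal = 0)
    -- there is no point of `𝒩*` with abscissa in `[t1,t2]` where `∂𝒩/∂t` vanishes
    (hreg : ∀ th ∈ Set.uIcc t1 t2, ∀ sh : ℝ, MvPolynomial.aeval ![th, sh] Ncal = 0 →
        MvPolynomial.aeval ![th, sh] (MvPolynomial.pderiv 0 Ncal) ≠ 0) :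
    ∀ a a' : Fin 4 → ℝ,
      IsProjectionOf n a x1 x2 →
      RelatedByProj n a x1 x2 (t1 : ℂ) (s1 : ℂ) →
      RelatedByProj n a x1 x2 (t2 : ℂ) (s2 : ℂ) →
      IsProjectionOf n a' x1 x2 →
      RelatedByProj n a' x1 x2 (t1 : ℂ) (s1 : ℂ) →
      RelatedByProj n a' x1 x2 (t2 : ℂ) (s2 : ℂ) →
      ∃ c : ℝ, c ≠ 0 ∧ a' = c • a := by
  rintro a a' ⟨ha, hna, -⟩ hA1 hA2 ⟨ha', hna', -⟩ hA1' hA2'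
  have hq : evalAffC x2 s1 ≠ evalAffC x2 s2 := by
    rcases eq_or_ne t1 t2 with rfl | ht
    · exact fun h => hpairsne (by rw [h])
    have hs : s1 ≠ s2 := hφ1 ▸ hφ2 ▸ MvPolynomial.apply_ne_apply_of_branch Ncal ht hφcont
      hφcurve fun t ht => hreg t ht _ (hφcurve t ht)
    exact fun h => hlucky1.2.2.2.1 ⟨s1, s2, by exact_mod_cast hs, hA1.2.1, hA2.2.1, rfl, h.symm⟩
  have hQ2 : homC x2 s2 ∉ span ℂ {homC x1 t1, homC x2 s1} :=
    snoc_one_not_mem_span_pair (hA1.dotProduct_homC_ne_zero hna hlucky1.1)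
      (hplane.dotProduct_homC_eq_zero hA1.2.1) (hplane.dotProduct_homC_eq_zero hA2.2.1) hq
  obtain ⟨c, hc⟩ := mem_span_singleton.1 <| mem_span_singleton_of_mem_inf_span_pair
    ⟨hA1.eye_mem_span hna hlucky1.1, hA2.eye_mem_span hna hlucky2.1⟩
    ⟨hA1'.eye_mem_span hna' hlucky1.1, hA2'.eye_mem_span hna' hlucky2.1⟩ (cmap4_ne_zero ha) hQ2
  exact exists_real_smul_of_ofReal_eq_smul hc.symm ha ha'

/-- Let `(p1,q1)` and `(p2,q2)` be two different lucky pairs, with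
`pj = x1(tj)`, `qj = x2(sj)`, `tj, sj ∈ ℝ`, and with `(t1,s1)`, `(t2,s2)` lying on the
plane curve `𝒩*`.  If `(t1,s1)` and `(t2,s2)` are connected by one real branch of `𝒩*`
(a continuous function `φ` with graph inside `𝒩*`) such that there is no point
`(t̂,ŝ) ∈ 𝒩*` with `t̂ ∈ [t1,t2]` at which `∂𝒩/∂t` vanishes, then there is at most one
projection `P_ã` mapping `C1` onto `C2` such that `P_ã(pj) = qj` for both `j = 1,2`. -/
theorem statement_9 (x1 x2 : Fin 3 → RatFunc ℝ) (n : Fin 4 → ℝ)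
    (Ncal : MvPolynomial (Fin 2) ℝ)
    (hx1 : ProperParam x1) (hx2 : ProperParam x2)
    (hnl1 : ¬ IsLineParam x1) (hnl2 : ¬ IsLineParam x2)
    (hn : PlaneNormalNZ n) (hplane : InPlane x2 n)
    (hsame : ¬ ∃ m : Fin 4 → ℝ, PlaneNormalNZ m ∧ InPlane x1 m ∧ InPlane x2 m)
    (hN : IsNcal x1 x2 Ncal)
    (t1 t2 s1 s2 : ℝ)
    (hpairsne : (evalAffC x1 (t1 : ℂ), evalAffC x2 (s1 : ℂ)) ≠
        (evalAffC x1 (t2 : ℂ), evalAffC x2 (s2 : ℂ)))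
    (hlucky1 : LuckyPair x1 x2 Ncal (t1 : ℂ) (s1 : ℂ))
    (hlucky2 : LuckyPair x1 x2 Ncal (t2 : ℂ) (s2 : ℂ))
    (hon1 : MvPolynomial.aeval ![t1, s1] Ncal = 0)
    (hon2 : MvPolynomial.aeval ![t2, s2] Ncal = 0)
    -- `(t1,s1)` and `(t2,s2)` are connected by one real branch of `𝒩*`
    (φ : ℝ → ℝ) (hφcont : ContinuousOn φ (Set.uIcc t1 t2))
    (hφ1 : φ t1 = s1) (hφ2 : φ t2 = s2)
    (hφcurve : ∀ t ∈ Set.uIcc t1 t2, MvPolynomial.aeval ![t, φ t] Ncal = 0)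
    -- there is no point of `𝒩*` with abscissa in `[t1,t2]` where `∂𝒩/∂t` vanishes
    (hreg : ∀ th ∈ Set.uIcc t1 t2, ∀ sh : ℝ, MvPolynomial.aeval ![th, sh] Ncal = 0 →
        MvPolynomial.aeval ![th, sh] (MvPolynomial.pderiv 0 Ncal) ≠ 0) :
    ∀ a a' : Fin 4 → ℝ,
      IsProjectionOf n a x1 x2 →
      RelatedByProj n a x1 x2 (t1 : ℂ) (s1 : ℂ) →
      RelatedByProj n a x1 x2 (t2 : ℂ) (s2 : ℂ) →
      IsProjectionOf n a' x1 x2 →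
      RelatedByProj n a' x1 x2 (t1 : ℂ) (s1 : ℂ) →
      RelatedByProj n a' x1 x2 (t2 : ℂ) (s2 : ℂ) →
      ∃ c : ℝ, c ≠ 0 ∧ a' = c • a :=
  statement_9_general x1 x2 n Ncal hplane t1 t2 s1 s2 hpairsne hlucky1 hlucky2 φ hφcont hφ1 hφ2
    hφcurve hreg

end
end
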